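/- arXiv:2401.03576 — 4 statements merged into one kernel-verified Lean document; each statement's English description precedes it below -/
import Mathlib

section
/- Let λ₁ ∈ (0, 1/2] and set λ₂* = (-3λ₁ + √(λ₁² + 4λ₁))/2 and μ = 1 - λ₁ - λ₂*. If 4√(μλ₁) < 1, then 1 - 4μλ₂* > (1 - 4√(μλ₁))², and hence √(1 - 4μλ₂*) + 4√(μλ₁) - 1 > 0. -/
/-- Boundary-case verification on the critical curve (λ₁, λ₂*):
    if 4√(μλ₁) < 1 then 1 - 4μλ₂* > (1 - 4√(μλ₁))², hence
    √(1 - 4μλ₂*) + 4√(μλ₁) - 1 > 0. -/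
theorem polling_boundary_case
    (l1 : ℝ) (hl1 : 0 < l1) (hl1' : l1 ≤ 1 / 2) :
    let l2s := (-3 * l1 + Real.sqrt (l1 ^ 2 + 4 * l1)) / 2
    let mu := 1 - l1 - l2s
    4 * Real.sqrt (mu * l1) < 1 →
      1 - 4 * mu * l2s > (1 - 4 * Real.sqrt (mu * l1)) ^ 2 ∧
      Real.sqrt (1 - 4 * mu * l2s) + 4 * Real.sqrt (mu * l1) - 1 > 0 := by
  intro l2s mu h
  set s := Real.sqrt (l1 ^ 2 + 4 * l1) with hs_def
  have harg : (0:ℝ) ≤ l1 ^ 2 + 4 * l1 := by positivity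
  have hs2 : s ^ 2 = l1 ^ 2 + 4 * l1 := Real.sq_sqrt harg
  have hs0 : 0 ≤ s := Real.sqrt_nonneg _
  -- l2s ≥ 0
  have h3 : 3 * l1 ≤ s := by
    rw [hs_def, Real.le_sqrt (by positivity) harg]
    nlinarith
  have hl2s0 : 0 ≤ l2s := by simp only [l2s]; linarith
  -- mu > 0
  have hslt : s < 2 + l1 := by
    rw [hs_def, Real.sqrt_lt' (by linarith)]; nlinarith
  have hmu : 0 < mu := by
    show (0:ℝ) < 1 - l1 - (-3 * l1 + s) / 2
    linarith
  -- decompose sqrts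
  set a := Real.sqrt mu with ha_def
  set b := Real.sqrt l1 with hb_def
  set c := Real.sqrt (l1 + 4) with hc_def
  have ha0 : 0 ≤ a := Real.sqrt_nonneg _
  have hb0 : 0 ≤ b := Real.sqrt_nonneg _
  have hc0 : 0 ≤ c := Real.sqrt_nonneg _
  have ha2 : a ^ 2 = mu := Real.sq_sqrt hmu.le
  have hb2 : b ^ 2 = l1 := Real.sq_sqrt hl1.le
  have hc2 : c ^ 2 = l1 + 4 := Real.sq_sqrt (by linarith)
  have hab : Real.sqrt (mu * l1) = a * b := Real.sqrt_mul hmu.le _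
  have hsbc : s = b * c := by
    rw [hs_def, hb_def, hc_def, ← Real.sqrt_mul hl1.le]
    ring_nf
  have habq : a * b < 1 / 4 := by rw [hab] at h; linarith
  have ha1 : a ≤ 1 := Real.sqrt_le_one.mpr (by show (1:ℝ) - l1 - l2s ≤ 1; linarith)
  have hc94 : c < 9 / 4 := by
    rw [hc_def, Real.sqrt_lt' (by norm_num)]; nlinarith
  -- key inequality
  have hkey : a * (5 * b + c) < 4 := by nlinarith
  have hbpos : 0 < b := Real.sqrt_pos.mpr hl1
  have hapos : 0 < a := Real.sqrt_pos.mpr hmu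
  have hmain : mu * (5 * l1 + s) < 4 * (a * b) := by
    have : mu * (5 * l1 + s) = (a * b) * (a * (5 * b + c)) := by
      rw [hsbc, ← ha2, ← hb2]; ring
    rw [this]
    calc (a * b) * (a * (5 * b + c)) < (a * b) * 4 := by
          apply mul_lt_mul_of_pos_left hkey (by positivity)
      _ = 4 * (a * b) := by ring
  have hmul2s : mu * l2s + 4 * mu * l1 = mu * (5 * l1 + s) / 2 := by
    show mu * ((-3 * l1 + s) / 2) + 4 * mu * l1 = _
    ring
  have hg1 : 1 - 4 * mu * l2s > (1 - 4 * Real.sqrt (mu * l1)) ^ 2 := by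
    rw [hab]
    have habsq : (a * b) ^ 2 = mu * l1 := by rw [← ha2, ← hb2]; ring
    have hexp : (1 - 4 * (a * b)) ^ 2 = 1 - 8 * (a * b) + 16 * (mu * l1) := by
      rw [← habsq]; ring
    have hlin : 4 * mu * l2s + 16 * (mu * l1) = 2 * (mu * (5 * l1 + s)) := by
      show 4 * ((1 - l1 - l2s)) * ((-3 * l1 + s) / 2) + _ = _
      show 4 * (1 - l1 - (-3 * l1 + s) / 2) * ((-3 * l1 + s) / 2) + 16 * ((1 - l1 - (-3 * l1 + s) / 2) * l1) = 2 * ((1 - l1 - (-3 * l1 + s) / 2) * (5 * l1 + s))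
      ring
    rw [hexp]
    linarith [hmain, hlin]
  refine ⟨hg1, ?_⟩
  have h1pos : 0 < 1 - 4 * Real.sqrt (mu * l1) := by linarith
  have : 1 - 4 * Real.sqrt (mu * l1) < Real.sqrt (1 - 4 * mu * l2s) := by
    rw [Real.lt_sqrt (by linarith)]
    exact hg1
  linarith
end

section
/- In the road-closure model, the twisted increment of the total number in system under the α-twist has mean α·(d/dγ)[log(F(γ)G(γ)/γ)] evaluated at γ = α, and this mean is strictly positive. -/
/-! Write `A = F(α)`, `B = G(α)`, `A' = α F'(α)`, `B' = α G'(α)`. Splitting the double series and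
using `ψ(α) = AB/α = 1` in the log-derivative, both sides equal `(A'B + AB' - AB)/α`.
For positivity, the geometric-sum bound `α (α ^ n - 1) ≤ n α ^ n (α - 1)` summed against `f` gives
`α (A - 1) ≤ (α - 1) A'`, and likewise for `G`; with `AB = α` this yields
`(α - 1)(A'B + AB' - AB) ≥ α (A - 1)(B - 1)`, which is positive since `F(α) > F(1) = 1` and
`G(α) > G(1) = 1`. -/

open Finset in
lemma mul_pow_sub_one_le {R : Type*} [CommRing R] [PartialOrder R] [IsOrderedRing R]
    {x : R} (hx : 1 ≤ x) (n : ℕ) : x * (x ^ n - 1) ≤ n * x ^ n * (x - 1) := by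
  have hsum : x * ∑ i ∈ range n, x ^ i ≤ n * x ^ n :=
    calc x * ∑ i ∈ range n, x ^ i = ∑ i ∈ range n, x ^ (i + 1) := by
          simp only [mul_sum, pow_succ']
      _ ≤ ∑ _i ∈ range n, x ^ n :=
          sum_le_sum fun i hi => pow_le_pow_right₀ hx (mem_range.1 hi)
      _ = n * x ^ n := by simp
  rw [← geom_sum_mul, ← mul_assoc]
  exact mul_le_mul_of_nonneg_right hsum (sub_nonneg.2 hx)

section PowerSeries

variable {a : ℕ → ℝ}

lemma summable_natCast_mul_mul_pow (ha : ∀ n, 0 ≤ a n) {x : ℝ} (hx : 0 ≤ x)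
    (hs : Summable fun n => a n * (2 * x) ^ n) :
    Summable fun n : ℕ => (n : ℝ) * (a n * x ^ n) := by
  refine hs.of_nonneg_of_le (fun n => by have := ha n; positivity) fun n => ?_
  have hn : (n : ℝ) ≤ 2 ^ n := by exact_mod_cast n.lt_two_pow_self.le
  calc (n : ℝ) * (a n * x ^ n) ≤ 2 ^ n * (a n * x ^ n) := by
        have := ha n; gcongr
    _ = a n * (2 * x) ^ n := by ring

lemma hasDerivAt_tsum_mul_pow (ha : ∀ n, 0 ≤ a n)
    (hs : ∀ y, 0 ≤ y → Summable fun n => a n * y ^ n) {x : ℝ} (hx : 0 < x) :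
    HasDerivAt (fun y => ∑' n, a n * y ^ n) ((∑' n : ℕ, (n : ℝ) * (a n * x ^ n)) / x) x := by
  rw [← tsum_div_const]
  have hbound := summable_natCast_mul_mul_pow ha (by positivity : 0 ≤ 2 * x) (hs _ (by positivity))
  refine hasDerivAt_tsum_of_isPreconnected (g := fun n y => a n * y ^ n)
    (g' := fun n y => (n : ℝ) * (a n * y ^ n) / y) (t := Set.Ioo (x / 2) (2 * x))
    (hbound.mul_left (2 / x)) isOpen_Ioo isPreconnected_Ioo (fun n y hy => ?_)
    (fun n y hy => ?_) ⟨by linarith, by linarith⟩ (hs x hx.le) ⟨by linarith, by linarith⟩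
  · have hy0 : y ≠ 0 := (by linarith [hy.1] : 0 < y).ne'
    have hpow : (n : ℝ) * (a n * y ^ n) / y = a n * (n * y ^ (n - 1)) := by
      rcases n with _ | k
      · simp
      · rw [pow_succ, Nat.add_sub_cancel]
        field_simp
    exact hpow ▸ (hasDerivAt_pow n y).const_mul (a n)
  · have hy0 : 0 < y := by linarith [hy.1]
    have := ha n
    rw [Real.norm_of_nonneg (by positivity)]
    calc (n : ℝ) * (a n * y ^ n) / y ≤ n * (a n * (2 * x) ^ n) / (x / 2) := by
          gcongr
          exacts [hy.2.le, hy.1.le]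
      _ = 2 / x * (n * (a n * (2 * x) ^ n)) := by ring

lemma tsum_lt_tsum_mul_pow (ha : ∀ n, 0 ≤ a n) {x : ℝ} (hx : 1 < x) (h₁ : Summable a)
    (hx' : Summable fun n => a n * x ^ n) (hpos : ∃ n, 1 ≤ n ∧ 0 < a n) :
    ∑' n, a n < ∑' n, a n * x ^ n := by
  obtain ⟨n₀, hn₀, han₀⟩ := hpos
  refine h₁.tsum_lt_tsum (i := n₀) (fun n => le_mul_of_one_le_right (ha n) (one_le_pow₀ hx.le))
    (lt_mul_of_one_lt_right han₀ (one_lt_pow₀ hx (by omega))) hx'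

lemma mul_tsum_mul_pow_sub_tsum_le (ha : ∀ n, 0 ≤ a n) {x : ℝ} (hx : 1 ≤ x) (h₁ : Summable a)
    (hx' : Summable fun n => a n * x ^ n)
    (hmean : Summable fun n : ℕ => (n : ℝ) * (a n * x ^ n)) :
    x * (∑' n, a n * x ^ n - ∑' n, a n) ≤ (x - 1) * ∑' n : ℕ, (n : ℝ) * (a n * x ^ n) := by
  rw [← hx'.tsum_sub h₁, ← tsum_mul_left, ← tsum_mul_left]
  refine ((hx'.sub h₁).mul_left x).tsum_le_tsum (fun n => ?_) (hmean.mul_left _)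
  calc x * (a n * x ^ n - a n) = a n * (x * (x ^ n - 1)) := by ring
    _ ≤ a n * (n * x ^ n * (x - 1)) := mul_le_mul_of_nonneg_left (mul_pow_sub_one_le hx n) (ha n)
    _ = (x - 1) * (n * (a n * x ^ n)) := by ring

end PowerSeries

lemma tsum_tsum_natCast_add_sub_one_mul {a b : ℕ → ℝ} (ha : Summable a) (hb : Summable b)
    (ha' : Summable fun n : ℕ => (n : ℝ) * a n) (hb' : Summable fun m : ℕ => (m : ℝ) * b m) :
    ∑' n : ℕ, ∑' m : ℕ, ((n : ℝ) + m - 1) * (a n * b m) =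
      (∑' n : ℕ, n * a n) * ∑' m, b m + (∑' n, a n) * (∑' m : ℕ, m * b m) -
        (∑' n, a n) * ∑' m, b m := by
  have hinner : ∀ n : ℕ, HasSum (fun m : ℕ => ((n : ℝ) + m - 1) * (a n * b m))
      ((n * a n - a n) * ∑' m, b m + a n * ∑' m : ℕ, m * b m) := fun n => by
    have hterm : (fun m : ℕ => ((n : ℝ) + m - 1) * (a n * b m)) =
        fun m => (n * a n - a n) * b m + a n * (m * b m) := by
      funext m
      ring
    rw [hterm]
    exact (hb.hasSum.mul_left _).add (hb'.hasSum.mul_left _)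
  rw [tsum_congr fun n => (hinner n).tsum_eq,
    (((ha'.hasSum.sub ha.hasSum).mul_right _).add (ha.hasSum.mul_right _)).tsum_eq]
  ring

lemma hasDerivAt_log_mul_div {F G : ℝ → ℝ} {F' G' x : ℝ} (hF : HasDerivAt F F' x)
    (hG : HasDerivAt G G' x) (hFx : F x ≠ 0) (hGx : G x ≠ 0) (hx : x ≠ 0) :
    HasDerivAt (fun γ => Real.log (F γ * G γ / γ)) (F' / F x + G' / G x - 1 / x) x := by
  refine (((hF.mul hG).div (hasDerivAt_id x) hx).log ?_).congr_deriv ?_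
  · simp [hFx, hGx, hx]
  · simp only [Pi.mul_apply, Pi.div_apply, id]
    field_simp

lemma add_sub_pos_of_twist {α A B A' B' : ℝ} (hα : 1 < α) (hA : 1 < A) (hB : 1 < B)
    (hAB : A * B = α) (hA' : α * (A - 1) ≤ (α - 1) * A') (hB' : α * (B - 1) ≤ (α - 1) * B') :
    0 < A' * B + A * B' - A * B := by
  have key : α * ((A - 1) * (B - 1)) ≤ (α - 1) * (A' * B + A * B' - A * B) := by
    nlinarith [mul_le_mul_of_nonneg_right hA' (by linarith : (0 : ℝ) ≤ B),
      mul_le_mul_of_nonneg_left hB' (by linarith : (0 : ℝ) ≤ A)]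
  have : 0 < α * ((A - 1) * (B - 1)) := by
    have := mul_pos (sub_pos.2 hA) (sub_pos.2 hB); positivity
  exact pos_of_mul_pos_right (this.trans_le key) (by linarith)

theorem road_closure_twisted_drift_positive_general
    (f g : ℕ → ℝ) (hf0 : ∀ n, 0 ≤ f n) (hg0 : ∀ n, 0 ≤ g n)
    (hf1 : ∑' n, f n = 1) (hg1 : ∑' n, g n = 1)
    (hFfin : ∀ γ : ℝ, 0 ≤ γ → Summable (fun n => f n * γ ^ n))
    (hGfin : ∀ γ : ℝ, 0 ≤ γ → Summable (fun n => g n * γ ^ n))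
    (hfpos : ∃ n, 1 ≤ n ∧ 0 < f n) (hgpos : ∃ n, 1 ≤ n ∧ 0 < g n)
    (α : ℝ) (hα : 1 < α)
    (htwist : (∑' n, f n * α ^ n) * (∑' n, g n * α ^ n) / α = 1) :
    (∑' n : ℕ, ∑' m : ℕ,
        ((n : ℝ) + (m : ℝ) - 1) * (f n * α ^ n * (g m * α ^ m)) / α) =
      α * deriv (fun γ : ℝ =>
        Real.log ((∑' n, f n * γ ^ n) * (∑' n, g n * γ ^ n) / γ)) α ∧
    0 < α * deriv (fun γ : ℝ =>
        Real.log ((∑' n, f n * γ ^ n) * (∑' n, g n * γ ^ n) / γ)) α := by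
  have hα0 : 0 < α := one_pos.trans hα
  have hf : Summable f := by simpa using hFfin 1 zero_le_one
  have hg : Summable g := by simpa using hGfin 1 zero_le_one
  have hfα := hFfin α hα0.le
  have hgα := hGfin α hα0.le
  have hf' := summable_natCast_mul_mul_pow hf0 hα0.le (hFfin _ (by positivity))
  have hg' := summable_natCast_mul_mul_pow hg0 hα0.le (hGfin _ (by positivity))
  have hA : 1 < ∑' n, f n * α ^ n := hf1 ▸ tsum_lt_tsum_mul_pow hf0 hα hf hfα hfpos
  have hB : 1 < ∑' n, g n * α ^ n := hg1 ▸ tsum_lt_tsum_mul_pow hg0 hα hg hgα hgpos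
  have hAB := (div_eq_one_iff_eq hα0.ne').1 htwist
  have hF := hasDerivAt_tsum_mul_pow hf0 hFfin hα0
  have hG := hasDerivAt_tsum_mul_pow hg0 hGfin hα0
  set A := ∑' n, f n * α ^ n
  set B := ∑' n, g n * α ^ n
  set A' := ∑' n : ℕ, n * (f n * α ^ n)
  set B' := ∑' n : ℕ, n * (g n * α ^ n)
  have hderiv : α * deriv (fun γ : ℝ =>
      Real.log ((∑' n, f n * γ ^ n) * (∑' n, g n * γ ^ n) / γ)) α =
      (A' * B + A * B' - A * B) / α := by
    rw [(hasDerivAt_log_mul_div hF hG (by positivity) (by positivity) hα0.ne').deriv]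
    change α * (A' / α / A + B' / α / B - 1 / α) = _
    rw [← hAB]
    field_simp
  refine ⟨?_, hderiv ▸ div_pos (add_sub_pos_of_twist hα hA hB hAB ?_ ?_) hα0⟩
  · rw [hderiv]
    simp only [tsum_div_const]
    rw [tsum_tsum_natCast_add_sub_one_mul hfα hgα hf' hg']
  · simpa [hf1] using mul_tsum_mul_pow_sub_tsum_le hf0 hα.le hf hfα hf'
  · simpa [hg1] using mul_tsum_mul_pow_sub_tsum_le hg0 hα.le hg hgα hg'

/-- The twisted mean increment of the total number in system equals
    α·(log ψ)′(α) where ψ(γ) = F(γ)G(γ)/γ, and it is strictly positive. -/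
theorem road_closure_twisted_drift_positive
    (f g : ℕ → ℝ) (hf0 : ∀ n, 0 ≤ f n) (hg0 : ∀ n, 0 ≤ g n)
    (hf1 : ∑' n, f n = 1) (hg1 : ∑' n, g n = 1)
    (hFfin : ∀ γ : ℝ, 0 ≤ γ → Summable (fun n => f n * γ ^ n))
    (hGfin : ∀ γ : ℝ, 0 ≤ γ → Summable (fun n => g n * γ ^ n))
    (hmean : (∑' n : ℕ, (n : ℝ) * f n) + (∑' n : ℕ, (n : ℝ) * g n) < 1)
    (hfpos : ∃ n, 1 ≤ n ∧ 0 < f n) (hgpos : ∃ n, 1 ≤ n ∧ 0 < g n)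
    (α : ℝ) (hα : 1 < α)
    (htwist : (∑' n, f n * α ^ n) * (∑' n, g n * α ^ n) / α = 1) :
    (∑' n : ℕ, ∑' m : ℕ,
        ((n : ℝ) + (m : ℝ) - 1) * (f n * α ^ n * (g m * α ^ m)) / α) =
      α * deriv (fun γ : ℝ =>
        Real.log ((∑' n, f n * γ ^ n) * (∑' n, g n * γ ^ n) / γ)) α ∧
    0 < α * deriv (fun γ : ℝ =>
        Real.log ((∑' n, f n * γ ^ n) * (∑' n, g n * γ ^ n) / γ)) α :=
  road_closure_twisted_drift_positive_general f g hf0 hg0 hf1 hg1 hFfin hGfin hfpos hgpos α hα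
    htwist
end

section
/- Let λ₁, λ₂, μ > 0 with λ₁ + λ₂ + μ = 1 and both ray conditions ρ⁻¹λ₁ > λ and ρ⁻¹λ₂ > λ hold, where λ = λ₁+λ₂ < μ and ρ = λ/μ. Let β_E = √(μ/λ₂) and let α_E satisfy λ₁α_E + λ₂β_E + μβ_E⁻¹ = 1. Then β_E < ρ⁻¹ < α_E, and consequently r := μ(β_E⁻¹ - α_E⁻¹) > 0. -/
/-!
With `L = λ₁ + λ₂` we have `ρ⁻¹ = μ / L`, and the ray condition for `λ₂` reads `L² < λ₂ μ`, i.e.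
`β_E² = μ / λ₂ < (μ / L)² = ρ⁻²`. The diagonal point `(ρ⁻¹, ρ⁻¹)` lies on the curve
`λ₁ α + λ₂ β + μ β⁻¹ = 1` since `λ₁ + λ₂ + μ = 1`, while `β_E` is the strict minimiser of
`β ↦ λ₂ β + μ β⁻¹`. Hence at height `β_E ≠ ρ⁻¹` the curve reaches strictly further east than at
height `ρ⁻¹`, that is `ρ⁻¹ < α_E`.
-/

lemma mul_add_div_lt_of_mul_sq_eq {a b s x : ℝ} (ha : 0 < a) (hx : 0 < x)
    (hb : a * s ^ 2 = b) (hne : s ≠ x) : a * s + b / s < a * x + b / x := by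
  subst hb
  have hgap : a * x + a * s ^ 2 / x - (a * s + a * s ^ 2 / s) = a * (x - s) ^ 2 / x := by
    field_simp
    ring
  have : 0 < a * (x - s) ^ 2 / x := by
    have := sub_ne_zero.mpr hne.symm
    positivity
  linarith

lemma sqrt_div_lt_div_of_sq_lt {m a b : ℝ} (hm : 0 < m) (ha : 0 < a) (hb : 0 < b)
    (h : b ^ 2 < a * m) : √(m / a) < m / b := by
  rw [Real.sqrt_lt' (by positivity), div_pow, div_lt_div_iff₀ ha (by positivity)]
  nlinarith

theorem polling_lyapunov_rate_positive_general
    (l1 l2 mu : ℝ) (hl1 : 0 < l1) (hl2 : 0 < l2) (hmu : 0 < mu)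
    (hsum : l1 + l2 + mu = 1)
    (hray2 : (((l1 + l2) / mu))⁻¹ * l2 > l1 + l2)
    (aE : ℝ)
    (haE : l1 * aE + l2 * Real.sqrt (mu / l2) + mu * (Real.sqrt (mu / l2))⁻¹ = 1) :
    Real.sqrt (mu / l2) < (((l1 + l2) / mu))⁻¹ ∧
    (((l1 + l2) / mu))⁻¹ < aE ∧
    0 < mu * ((Real.sqrt (mu / l2))⁻¹ - aE⁻¹) := by
  rw [inv_div] at hray2 ⊢
  rw [← div_eq_mul_inv] at haE
  have hL : 0 < l1 + l2 := add_pos hl1 hl2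
  set L := l1 + l2
  set s := √(mu / l2)
  have hs : 0 < s := Real.sqrt_pos.mpr (div_pos hmu hl2)
  have hs_sq : l2 * s ^ 2 = mu := by
    rw [Real.sq_sqrt (div_pos hmu hl2).le]
    field_simp
  have hray : L ^ 2 < l2 * mu := by
    rw [gt_iff_lt, div_mul_eq_mul_div, lt_div_iff₀ hL] at hray2
    nlinarith
  have hs_lt : s < mu / L := sqrt_div_lt_div_of_sq_lt hmu hl2 hL hray
  have hdiag : l1 * (mu / L) + (l2 * (mu / L) + mu / (mu / L)) = 1 := by
    field_simp
    linear_combination L * hsum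
  have hmin : l2 * s + mu / s < l2 * (mu / L) + mu / (mu / L) :=
    mul_add_div_lt_of_mul_sq_eq hl2 (by positivity) hs_sq hs_lt.ne
  have hc_lt : mu / L < aE := lt_of_mul_lt_mul_left (by linarith) hl1.le
  refine ⟨hs_lt, hc_lt, mul_pos hmu (sub_pos.mpr ?_)⟩
  exact inv_strictAnti₀ hs (hs_lt.trans hc_lt)

/-- Under both ray conditions, β_E < ρ⁻¹ < α_E and r = μ(β_E⁻¹ - α_E⁻¹) > 0. -/
theorem polling_lyapunov_rate_positive
    (l1 l2 mu : ℝ) (hl1 : 0 < l1) (hl2 : 0 < l2) (hmu : 0 < mu)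
    (hsum : l1 + l2 + mu = 1) (hstab : l1 + l2 < mu)
    (hray1 : (((l1 + l2) / mu))⁻¹ * l1 > l1 + l2)
    (hray2 : (((l1 + l2) / mu))⁻¹ * l2 > l1 + l2)
    (aE : ℝ)
    (haE : l1 * aE + l2 * Real.sqrt (mu / l2) + mu * (Real.sqrt (mu / l2))⁻¹ = 1) :
    Real.sqrt (mu / l2) < (((l1 + l2) / mu))⁻¹ ∧
    (((l1 + l2) / mu))⁻¹ < aE ∧
    0 < mu * ((Real.sqrt (mu / l2))⁻¹ - aE⁻¹) :=
  polling_lyapunov_rate_positive_general l1 l2 mu hl1 hl2 hmu hsum hray2 aE haE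
end

section
/- Let V(x,y,s) = α_E^x β_E^y on the state space of the polling Markov chain, where (α_E, β_E) is the easternmost point of Curve 2 and β_E < ρ⁻¹ < α_E. Then: (i) KV(x,y,2) = V(x,y,2) for all states on sheet 2; (ii) for (x,y,1) ≠ (0,0,1), KV(x,y,1) = (1 - r)V(x,y,1) where r = μ(β_E⁻¹ - α_E⁻¹) > 0. -/
/-- The Lyapunov function V(x,y) = α_E^x β_E^y is harmonic for the polling kernel
    on sheet 2, and satisfies KV = (1-r)V on sheet 1 away from the origin. -/
theorem polling_lyapunov_drift
    (l1 l2 mu aE bE : ℝ) (hl1 : 0 < l1) (hl2 : 0 < l2) (hmu : 0 < mu)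
    (hsum : l1 + l2 + mu = 1) (hstab : l1 + l2 < mu)
    (haE : 0 < aE) (hbE : 0 < bE)
    (hcurve : l1 * aE + l2 * bE + mu * bE⁻¹ = 1)
    (horder : bE < (((l1 + l2) / mu))⁻¹ ∧ (((l1 + l2) / mu))⁻¹ < aE) :
    (∀ x y : ℕ, 1 ≤ y →
      l1 * (aE ^ (x + 1) * bE ^ y) + l2 * (aE ^ x * bE ^ (y + 1)) +
        mu * (aE ^ x * bE ^ (y - 1)) = aE ^ x * bE ^ y) ∧
    (∀ x y : ℕ, 1 ≤ x →
      l1 * (aE ^ (x + 1) * bE ^ y) + l2 * (aE ^ x * bE ^ (y + 1)) +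
        mu * (aE ^ (x - 1) * bE ^ y) =
      (1 - mu * (bE⁻¹ - aE⁻¹)) * (aE ^ x * bE ^ y)) ∧
    0 < mu * (bE⁻¹ - aE⁻¹) := by
  have hbne : bE ≠ 0 := ne_of_gt hbE
  have hane : aE ≠ 0 := ne_of_gt haE
  have hkey : l1 * aE * bE + l2 * bE * bE + mu = bE := by
    have := congrArg (· * bE) hcurve
    field_simp at this
    linarith [this]
  refine ⟨?_, ?_, ?_⟩
  · intro x y hy
    obtain ⟨z, rfl⟩ : ∃ z, y = z + 1 := ⟨y - 1, (Nat.succ_pred_eq_of_pos hy).symm⟩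
    simp only [Nat.add_sub_cancel, pow_succ]
    linear_combination (aE ^ x * bE ^ z) * hkey
  · intro x y hx
    obtain ⟨z, rfl⟩ : ∃ z, x = z + 1 := ⟨x - 1, (Nat.succ_pred_eq_of_pos hx).symm⟩
    simp only [Nat.add_sub_cancel, pow_succ]
    have hkey2 : l1 * aE * aE + l2 * bE * aE + mu =
        (1 - mu * (bE⁻¹ - aE⁻¹)) * aE := by
      have h1 : l1 * aE + l2 * bE = 1 - mu * bE⁻¹ := by linarith
      have h2 : aE⁻¹ * aE = 1 := inv_mul_cancel₀ hane
      nlinarith [h1, h2]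
    linear_combination (aE ^ z * bE ^ y) * hkey2
  · have hρ : bE < aE := lt_trans horder.1 horder.2
    have : aE⁻¹ < bE⁻¹ := by
      exact inv_strictAnti₀ hbE hρ
    have := sub_pos.mpr this
    positivity
end
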